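/- arXiv:2408.02515 — 2 statements merged into one kernel-verified Lean document; each statement's English description precedes it below -/
import Mathlib

section
/- Let ω_c > 0 and let S : [0,∞) → ℝ be Lebesgue integrable with S(ω) = ω · G(ω) on [0, ω_c), where G is twice differentiable on [0, ω_c), G'' is bounded on [0, ω_c), and G(0) ≠ 0, G'(0) ≠ 0. Define Γ(t) = ∫₀^∞ S(ω)(1 − cos(ωt))/ω² dω for t ≥ 0. Then there exists a constant C₁ ∈ ℝ such that Γ(t) − G(0)·ln(t) → C₁ as t → ∞. Moreover, if S(ω) ≥ 0 for all ω ≥ 0, then G(0) > 0. -/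
/-!
Since `G` is differentiable at `0`, `S ω / ω ^ 2 = G 0 / ω + O(1)` near `0`, so for small `δ > 0`
the function `f ω = S ω / ω ^ 2 - G 0 · 1_{(0,δ)}(ω) / ω` is integrable on `(0, ∞)`, and
`Γ(t) = ∫ f - ∫ f(ω) cos(ωt) dω + G 0 · ∫₀^{δt} (1 - cos u) / u du`.
The middle term tends to `0` by the Riemann–Lebesgue lemma, and
`∫₀^x (1 - cos u) / u du - log x` converges because `∫₁^x cos u / u du` does (integrate by parts).
For the sign, `G = S / ω ≥ 0` on `(0, ω_c)` and `G` is continuous at `0`.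
-/

open MeasureTheory Real Filter Set
open scoped FourierTransform Interval Topology

theorem tendsto_integral_mul_cos_atTop {f : ℝ → ℝ} (hf : Integrable f) :
    Tendsto (fun t => ∫ v, f v * cos (v * t)) atTop (𝓝 0) := by
  have hscale : Tendsto (fun t : ℝ => t / (2 * π)) atTop (cocompact ℝ) :=
    (tendsto_id.atTop_div_const (by positivity)).mono_right atTop_le_cocompact
  have hRL := (Complex.continuous_re.tendsto 0).comp
    ((Real.tendsto_integral_exp_smul_cocompact fun v => (f v : ℂ)).comp hscale)
  rw [Complex.zero_re] at hRL
  refine hRL.congr fun t => ?_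
  have hint : Integrable (fun v : ℝ => 𝐞 (-(v * (t / (2 * π)))) • (f v : ℂ)) := by
    simpa [mul_comm] using (Real.fourierIntegral_convergent_iff (t / (2 * π))).2 hf.ofReal
  simp only [Function.comp_apply]
  rw [← RCLike.re_eq_complex_re, ← integral_re hint]
  congr 1 with v
  rw [Circle.smul_def, Real.fourierChar_apply, smul_eq_mul, RCLike.re_eq_complex_re,
    Complex.re_mul_ofReal, Complex.exp_ofReal_mul_I_re,
    show 2 * π * -(v * (t / (2 * π))) = -(v * t) by field_simp,
    cos_neg, mul_comm]

theorem tendsto_setIntegral_mul_cos_atTop {f : ℝ → ℝ} {s : Set ℝ} (hs : MeasurableSet s)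
    (hf : IntegrableOn f s) : Tendsto (fun t => ∫ v in s, f v * cos (v * t)) atTop (𝓝 0) := by
  refine (tendsto_integral_mul_cos_atTop (hf.integrable_indicator hs)).congr fun t => ?_
  rw [← integral_indicator hs]
  congr 1 with v
  by_cases hv : v ∈ s <;> simp [hv]

theorem integrableOn_Ioi_inv_sq {c : ℝ} (hc : 0 < c) :
    IntegrableOn (fun u : ℝ => (u ^ 2)⁻¹) (Ioi c) :=
  (integrableOn_Ioi_rpow_of_lt (by norm_num : (-2 : ℝ) < -1) hc).congr_fun
    (fun u hu => by simp [rpow_neg (hc.trans hu).le]) measurableSet_Ioi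

theorem tendsto_inv_mul_sin_atTop : Tendsto (fun x : ℝ => x⁻¹ * sin x) atTop (𝓝 0) :=
  tendsto_inv_atTop_zero.zero_mul_isBoundedUnder_le
    (isBoundedUnder_of ⟨1, fun x => by simpa using abs_sin_le_one x⟩)

theorem exists_tendsto_integral_inv_mul_cos_atTop :
    ∃ L, Tendsto (fun x => ∫ u in (1 : ℝ)..x, u⁻¹ * cos u) atTop (𝓝 L) := by
  have htail : IntegrableOn (fun u : ℝ => -(u ^ 2)⁻¹ * sin u) (Ioi 1) :=
    (integrableOn_Ioi_inv_sq one_pos).neg.mul_bdd continuous_sin.aestronglyMeasurable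
      (ae_of_all _ fun u => by simpa using abs_sin_le_one u)
  have hparts : ∀ x ≥ (1 : ℝ), ∫ u in (1 : ℝ)..x, u⁻¹ * cos u
      = x⁻¹ * sin x - 1⁻¹ * sin 1 - ∫ u in (1 : ℝ)..x, -(u ^ 2)⁻¹ * sin u := by
    intro x hx
    have hpos : ∀ u ∈ [[1, x]], u ≠ 0 := fun u hu => by
      rw [uIcc_of_le hx] at hu; linarith [hu.1]
    exact intervalIntegral.integral_mul_deriv_eq_deriv_mul
      (fun u hu => hasDerivAt_inv (hpos u hu)) (fun u _ => hasDerivAt_sin u)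
      (((continuousOn_pow 2).inv₀ fun u hu => pow_ne_zero 2 (hpos u hu)).neg.intervalIntegrable)
      (continuous_cos.intervalIntegrable _ _)
  refine ⟨0 - 1⁻¹ * sin 1 - ∫ u in Ioi 1, -(u ^ 2)⁻¹ * sin u, ?_⟩
  refine Tendsto.congr' ?_ ((tendsto_inv_mul_sin_atTop.sub_const _).sub
    (intervalIntegral_tendsto_integral_Ioi 1 htail tendsto_id))
  filter_upwards [eventually_ge_atTop 1] with x hx
  exact (hparts x hx).symm

theorem one_sub_cos_div_eq_sin_mul_sinc (u : ℝ) :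
    (1 - cos u) / u = sin (u / 2) * sinc (u / 2) := by
  rcases eq_or_ne u 0 with rfl | hu
  · simp
  · conv_lhs => rw [← mul_div_cancel₀ u two_ne_zero, cos_two_mul_eq_one_sub]
    rw [sinc_of_ne_zero (by positivity)]
    field_simp
    ring

-- The junk value `(1 - cos 0) / 0 = 0` is the continuous extension.
theorem continuous_one_sub_cos_div : Continuous fun u : ℝ => (1 - cos u) / u := by
  simp_rw [one_sub_cos_div_eq_sin_mul_sinc]
  fun_prop

theorem exists_tendsto_integral_one_sub_cos_div_sub_log :
    ∃ c, Tendsto (fun x => (∫ u in (0 : ℝ)..x, (1 - cos u) / u) - log x) atTop (𝓝 c) := by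
  obtain ⟨L, hL⟩ := exists_tendsto_integral_inv_mul_cos_atTop
  refine ⟨(∫ u in (0 : ℝ)..1, (1 - cos u) / u) - L, (tendsto_const_nhds.sub hL).congr' ?_⟩
  filter_upwards [eventually_ge_atTop 1] with x hx
  have hpos : ∀ u ∈ [[1, x]], u ≠ 0 := fun u hu => by
    rw [uIcc_of_le hx] at hu; linarith [hu.1]
  have hinv : IntervalIntegrable (fun u : ℝ => u⁻¹) volume 1 x :=
    (continuousOn_inv₀.mono fun u hu => hpos u hu).intervalIntegrable
  have hsplit : ∫ u in (1 : ℝ)..x, (1 - cos u) / u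
      = (∫ u in (1 : ℝ)..x, u⁻¹) - ∫ u in (1 : ℝ)..x, u⁻¹ * cos u := by
    rw [← intervalIntegral.integral_sub hinv (hinv.mul_continuousOn continuous_cos.continuousOn)]
    congr 1 with u
    ring
  rw [← intervalIntegral.integral_add_adjacent_intervals
    (continuous_one_sub_cos_div.intervalIntegrable 0 1)
    (continuous_one_sub_cos_div.intervalIntegrable 1 x), hsplit,
    integral_inv_of_pos one_pos (by linarith), div_one]
  ring

theorem one_sub_cos_mul_div_eq (ω t : ℝ) :
    (1 - cos (ω * t)) / ω = t * ((1 - cos (ω * t)) / (ω * t)) := by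
  rcases eq_or_ne ω 0 with rfl | hω
  · simp
  rcases eq_or_ne t 0 with rfl | ht
  · simp
  field_simp

theorem continuous_one_sub_cos_mul_div (t : ℝ) : Continuous fun ω : ℝ => (1 - cos (ω * t)) / ω := by
  simp_rw [one_sub_cos_mul_div_eq _ t]
  exact continuous_const.mul (continuous_one_sub_cos_div.comp (continuous_mul_const t))

theorem integral_one_sub_cos_mul_div (δ t : ℝ) :
    ∫ ω in (0 : ℝ)..δ, (1 - cos (ω * t)) / ω = ∫ u in (0 : ℝ)..δ * t, (1 - cos u) / u := by
  rcases eq_or_ne t 0 with rfl | ht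
  · simp
  simp_rw [one_sub_cos_mul_div_eq _ t, intervalIntegral.integral_const_mul,
    intervalIntegral.integral_comp_mul_right (fun u => (1 - cos u) / u) ht, zero_mul, smul_eq_mul,
    mul_inv_cancel_left₀ ht]

theorem exists_tendsto_integral_one_sub_cos_mul_div_sub_log {δ : ℝ} (hδ : 0 < δ) :
    ∃ L, Tendsto (fun t => (∫ ω in (0 : ℝ)..δ, (1 - cos (ω * t)) / ω) - log t) atTop (𝓝 L) := by
  obtain ⟨L, hL⟩ := exists_tendsto_integral_one_sub_cos_div_sub_log
  refine ⟨L + log δ, ((hL.comp (tendsto_id.const_mul_atTop hδ)).add_const (log δ)).congr' ?_⟩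
  filter_upwards [eventually_gt_atTop 0] with t ht
  rw [Function.comp_apply, id, integral_one_sub_cos_mul_div, log_mul hδ.ne' ht.ne']
  ring

noncomputable def decoherenceExponent (S : ℝ → ℝ) (t : ℝ) : ℝ :=
  ∫ ω in Ioi 0, S ω * (1 - cos (ω * t)) / ω ^ 2

theorem integrableOn_div_sq_sub_indicator {S : ℝ → ℝ} {c δ B : ℝ} (hδ : 0 < δ)
    (hS : IntegrableOn S (Ioi 0)) (hB : ∀ ω ∈ Ioo 0 δ, |S ω - c * ω| ≤ B * ω ^ 2) :
    IntegrableOn (fun ω => S ω / ω ^ 2 - (Ioo 0 δ).indicator (fun ω => c / ω) ω) (Ioi 0) := by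
  have hmeas : AEStronglyMeasurable
      (fun ω => S ω / ω ^ 2 - (Ioo 0 δ).indicator (fun ω => c / ω) ω) (volume.restrict (Ioi 0)) :=
    (hS.aestronglyMeasurable.div₀ (measurable_id.pow_const 2).aestronglyMeasurable).sub
      ((measurable_const.div measurable_id).indicator measurableSet_Ioo).aestronglyMeasurable
  rw [← Ioo_union_Ici_eq_Ioi hδ]
  refine IntegrableOn.union ⟨hmeas.mono_set Ioo_subset_Ioi_self, ?_⟩ ?_
  · refine HasFiniteIntegral.restrict_of_bounded (C := B) measure_Ioo_lt_top ?_
    filter_upwards [ae_restrict_mem measurableSet_Ioo] with ω hω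
    have hω2 : 0 < ω ^ 2 := pow_pos hω.1 2
    rw [indicator_of_mem hω, norm_eq_abs, show S ω / ω ^ 2 - c / ω = (S ω - c * ω) / ω ^ 2 by
      field_simp, abs_div, abs_of_pos hω2, div_le_iff₀ hω2]
    exact hB ω hω
  · refine Integrable.mono' ((hS.mono_set (Ici_subset_Ioi.mpr hδ)).norm.div_const (δ ^ 2))
      (hmeas.mono_set (Ici_subset_Ioi.mpr hδ)) ?_
    filter_upwards [ae_restrict_mem measurableSet_Ici] with ω (hω : δ ≤ ω)
    rw [indicator_of_notMem (fun h => (h.2.trans_le hω).false), sub_zero, norm_div, norm_pow,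
      norm_of_nonneg (hδ.le.trans hω)]
    gcongr

theorem decoherenceExponent_eq {S f : ℝ → ℝ} {c δ : ℝ} (hδ : 0 ≤ δ) (hf : IntegrableOn f (Ioi 0))
    (hSf : ∀ ω, S ω / ω ^ 2 = f ω + (Ioo 0 δ).indicator (fun ω => c / ω) ω) (t : ℝ) :
    decoherenceExponent S t = (∫ ω in Ioi 0, f ω) - (∫ ω in Ioi 0, f ω * cos (ω * t))
      + c * ∫ ω in (0 : ℝ)..δ, (1 - cos (ω * t)) / ω := by
  have hpt : ∀ ω, S ω * (1 - cos (ω * t)) / ω ^ 2 = (f ω - f ω * cos (ω * t))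
      + (Ioo 0 δ).indicator (fun ω => c * ((1 - cos (ω * t)) / ω)) ω := by
    intro ω
    rw [mul_div_right_comm, hSf]
    by_cases hω : ω ∈ Ioo 0 δ <;> simp only [hω, indicator_of_mem, indicator_of_notMem,
      not_false_eq_true] <;> ring
  have hcos : IntegrableOn (fun ω => f ω * cos (ω * t)) (Ioi 0) :=
    hf.mul_bdd (by fun_prop : Continuous _).aestronglyMeasurable
      (ae_of_all _ fun ω => abs_cos_le_one _)
  have hnear : IntegrableOn ((Ioo 0 δ).indicator fun ω => c * ((1 - cos (ω * t)) / ω)) (Ioi 0) :=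
    ((integrable_indicator_iff measurableSet_Ioo).2 (((continuous_one_sub_cos_mul_div t).const_mul
      c).integrableOn_Icc.mono_set Ioo_subset_Icc_self)).integrableOn
  simp_rw [decoherenceExponent, hpt]
  have hdiff : IntegrableOn (fun ω => f ω - f ω * cos (ω * t)) (Ioi 0) := hf.sub hcos
  rw [integral_add hdiff hnear, integral_sub hf hcos,
    setIntegral_indicator measurableSet_Ioo, inter_eq_right.mpr Ioo_subset_Ioi_self,
    integral_const_mul, intervalIntegral.integral_of_le hδ, integral_Ioc_eq_integral_Ioo]

theorem exists_tendsto_decoherenceExponent_sub_log {S : ℝ → ℝ} {c : ℝ}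
    (hS : IntegrableOn S (Ioi 0)) (hS0 : (fun ω => S ω - c * ω) =O[𝓝[>] 0] fun ω => ω ^ 2) :
    ∃ C, Tendsto (fun t => decoherenceExponent S t - c * log t) atTop (𝓝 C) := by
  obtain ⟨δ, hδ, B, hB⟩ : ∃ δ > 0, ∃ B, ∀ ω ∈ Ioo 0 δ, |S ω - c * ω| ≤ B * ω ^ 2 := by
    obtain ⟨B, hB⟩ := hS0.bound
    obtain ⟨δ, hδ, hsub⟩ := mem_nhdsGT_iff_exists_Ioo_subset.mp hB
    exact ⟨δ, hδ, B, fun ω hω => by simpa using hsub hω⟩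
  set f := fun ω => S ω / ω ^ 2 - (Ioo 0 δ).indicator (fun ω => c / ω) ω
  have hf : IntegrableOn f (Ioi 0) := integrableOn_div_sq_sub_indicator hδ hS hB
  obtain ⟨L, hL⟩ := exists_tendsto_integral_one_sub_cos_mul_div_sub_log hδ
  have hRL := tendsto_setIntegral_mul_cos_atTop measurableSet_Ioi hf
  refine ⟨(∫ ω in Ioi 0, f ω) - 0 + c * L,
    ((tendsto_const_nhds.sub hRL).add (hL.const_mul c)).congr fun t => ?_⟩
  rw [decoherenceExponent_eq hδ.le hf (fun ω => (sub_add_cancel _ _).symm) t]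
  ring

theorem HasDerivWithinAt.isBigO_mul_sub_mul_sq {G : ℝ → ℝ} {g : ℝ} {s : Set ℝ}
    (hG : HasDerivWithinAt G g s 0) (hs : s ∈ 𝓝[>] 0) :
    (fun ω => ω * G ω - G 0 * ω) =O[𝓝[>] 0] fun ω => ω ^ 2 := by
  have := (Asymptotics.isBigO_refl (fun ω : ℝ => ω) (𝓝[>] 0)).mul
    (hG.hasFDerivWithinAt.isBigO_sub.mono (nhdsWithin_le_of_mem hs))
  exact this.congr (fun ω => by ring) (fun ω => by ring)

theorem trushechkin_case_p_eq_one_general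
    (ωc : ℝ) (hωc : 0 < ωc)
    (S G G' : ℝ → ℝ)
    (hS_int : IntegrableOn S (Ici 0))
    (hfact : ∀ ω ∈ Ico 0 ωc, S ω = ω * G ω)
    (hG' : ∀ ω ∈ Ico 0 ωc, HasDerivWithinAt G (G' ω) (Ico 0 ωc) ω)
    (hG0 : G 0 ≠ 0) :
    (∃ C₁ : ℝ,
      Tendsto (fun t : ℝ =>
          (∫ ω in Ioi (0:ℝ), S ω * (1 - Real.cos (ω * t)) / ω ^ 2) - G 0 * Real.log t)
        atTop (nhds C₁)) ∧
    ((∀ ω ≥ (0:ℝ), 0 ≤ S ω) → 0 < G 0) := by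
  have hIco : Ico 0 ωc ∈ 𝓝[>] (0 : ℝ) := mem_of_superset (Ioo_mem_nhdsGT hωc) Ioo_subset_Ico_self
  have hG := hG' 0 ⟨le_rfl, hωc⟩
  have hfact' : ∀ᶠ ω in 𝓝[>] 0, S ω = ω * G ω := eventually_of_mem hIco hfact
  refine ⟨exists_tendsto_decoherenceExponent_sub_log (hS_int.mono_set Ioi_subset_Ici_self)
    ((hG.isBigO_mul_sub_mul_sq hIco).congr' (hfact'.mono fun ω h => by simp only [h]) .rfl),
    fun hS => ?_⟩
  have hG_nonneg : ∀ᶠ ω in 𝓝[>] 0, 0 ≤ G ω := by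
    filter_upwards [hfact', self_mem_nhdsWithin] with ω hω (hω0 : 0 < ω)
    exact (mul_nonneg_iff_of_pos_left hω0).mp (hω ▸ hS ω hω0.le)
  exact (ge_of_tendsto (hG.continuousWithinAt.mono_of_mem_nhdsWithin hIco) hG_nonneg).lt_of_ne' hG0

/-- **Trushechkin's theorem, case `p = 1`.**
If `S` is integrable on `[0,∞)` and factors as `S ω = ω · G ω` on `[0, ω_c)` with `G` twice
differentiable on `[0, ω_c)`, `G''` bounded there, and `G 0 ≠ 0`, `G' 0 ≠ 0`, then there is a
constant `C₁` such that `Γ t - G 0 · ln t → C₁` as `t → ∞`, where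
`Γ t = ∫₀^∞ S ω (1 - cos (ω t)) / ω² dω`; moreover if `S ≥ 0` then `G 0 > 0`. -/
theorem trushechkin_case_p_eq_one
    (ωc : ℝ) (hωc : 0 < ωc)
    (S G G' G'' : ℝ → ℝ)
    (hS_int : IntegrableOn S (Ici 0))
    (hfact : ∀ ω ∈ Ico 0 ωc, S ω = ω * G ω)
    (hG' : ∀ ω ∈ Ico 0 ωc, HasDerivWithinAt G (G' ω) (Ico 0 ωc) ω)
    (hG'' : ∀ ω ∈ Ico 0 ωc, HasDerivWithinAt G' (G'' ω) (Ico 0 ωc) ω)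
    (hG''bd : ∃ M : ℝ, ∀ ω ∈ Ico 0 ωc, |G'' ω| ≤ M)
    (hG0 : G 0 ≠ 0) (hG'0 : G' 0 ≠ 0) :
    (∃ C₁ : ℝ,
      Tendsto (fun t : ℝ =>
          (∫ ω in Ioi (0:ℝ), S ω * (1 - Real.cos (ω * t)) / ω ^ 2) - G 0 * Real.log t)
        atTop (nhds C₁)) ∧
    ((∀ ω ≥ (0:ℝ), 0 ≤ S ω) → 0 < G 0) :=
  trushechkin_case_p_eq_one_general ωc hωc S G G' hS_int hfact hG' hG0
end

section
/- Let ω_c > 0, −1 < p < 0, and let S : [0,∞) → ℝ be Lebesgue integrable with S(ω) = ω^p · G(ω) on (0, ω_c), where G is twice differentiable on [0, ω_c), G'' is bounded on [0, ω_c), and G(0) ≠ 0, G'(0) ≠ 0. Define Γ(t) = ∫₀^∞ S(ω)(1 − cos(ωt))/ω² dω for t ≥ 0. Then there exist constants C₂, C₄ ∈ ℝ such that (Γ(t) − C₂ − G(0)·C₄·t^{1−p})/t → 0 as t → ∞; moreover, if S(ω) ≥ 0 for all ω ≥ 0, then G(0)·C₄ > 0. -/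
open MeasureTheory Real Filter Set

/-!
Split `S ω / ω² = G 0 · ω^(p-2) + h ω` on `(0, ∞)`. The leading term scales exactly:
`∫ ω^(p-2) (1 - cos ωt) dω = t^(1-p) C₄` with `C₄ = ∫ x^(p-2) (1 - cos x) dx > 0`.
Since `G''` is bounded, `|G ω - G 0| ≤ L ω`, so `|h ω| ≤ L ω^(p-1)` near `0` and `ω^s h ω` is
integrable for any `-p < s < 1`. With `1 - cos x ≤ 2 x^s` the remainder of `Γ t` is then
`O(t^s) = o(t)`.
-/

lemma one_sub_cos_le_two_mul_rpow {s x : ℝ} (hs0 : 0 ≤ s) (hs2 : s ≤ 2) (hx : 0 ≤ x) :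
    1 - cos x ≤ 2 * x ^ s := by
  rcases le_total 1 x with h1 | h1
  · nlinarith [one_le_rpow h1 hs0, neg_one_le_cos x]
  · have hx2 : x ^ (2 : ℝ) ≤ x ^ s := rpow_le_rpow_of_exponent_ge' hx h1 hs0 hs2
    rw [rpow_two] at hx2
    nlinarith [one_sub_sq_div_two_le_cos (x := x)]

lemma norm_mul_one_sub_cos_le {s ω t : ℝ} (hs0 : 0 ≤ s) (hs2 : s ≤ 2) (hω : 0 ≤ ω) (ht : 0 ≤ t)
    (c : ℝ) : ‖c * (1 - cos (ω * t))‖ ≤ 2 * t ^ s * ‖ω ^ s * c‖ := by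
  have hcos : 0 ≤ 1 - cos (ω * t) := by linarith [cos_le_one (ω * t)]
  have hle := one_sub_cos_le_two_mul_rpow hs0 hs2 (mul_nonneg hω ht)
  rw [mul_rpow hω ht] at hle
  rw [norm_mul, norm_mul, Real.norm_of_nonneg hcos, Real.norm_of_nonneg (rpow_nonneg hω s)]
  nlinarith [norm_nonneg c, rpow_nonneg ht s, rpow_nonneg hω s]

section OneSubCos

variable {h : ℝ → ℝ} {s : ℝ}

lemma MeasureTheory.IntegrableOn.mul_one_sub_cos {U : Set ℝ} (hU : MeasurableSet U)
    (hU0 : U ⊆ Ioi 0) (hs0 : 0 ≤ s) (hs2 : s ≤ 2) (hh : IntegrableOn (fun ω ↦ ω ^ s * h ω) U)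
    {t : ℝ} (ht : 0 ≤ t) :
    IntegrableOn (fun ω ↦ h ω * (1 - cos (ω * t))) U := by
  have hmeas : AEStronglyMeasurable h (volume.restrict U) := by
    refine ((measurable_id.pow_const (-s)).aestronglyMeasurable.mul hh.aestronglyMeasurable).congr
      (ae_restrict_of_forall_mem hU fun ω hω ↦ ?_)
    have hω : 0 < ω := hU0 hω
    simp only [Pi.mul_apply, id, ← mul_assoc, ← rpow_add hω, neg_add_cancel, rpow_zero, one_mul]
  refine Integrable.mono' (hh.norm.const_mul (2 * t ^ s))
    (hmeas.mul (by fun_prop : Measurable fun ω : ℝ ↦ 1 - cos (ω * t)).aestronglyMeasurable) ?_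
  exact ae_restrict_of_forall_mem hU fun ω hω ↦
    norm_mul_one_sub_cos_le hs0 hs2 (le_of_lt (hU0 hω)) ht (h ω)

lemma abs_integral_mul_one_sub_cos_le (hs0 : 0 ≤ s) (hs2 : s ≤ 2)
    (hh : IntegrableOn (fun ω ↦ ω ^ s * h ω) (Ioi 0)) {t : ℝ} (ht : 0 ≤ t) :
    |∫ ω in Ioi 0, h ω * (1 - cos (ω * t))| ≤ 2 * t ^ s * ∫ ω in Ioi 0, ‖ω ^ s * h ω‖ := by
  rw [← Real.norm_eq_abs, ← integral_const_mul]
  exact norm_integral_le_of_norm_le (hh.norm.const_mul _)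
    (ae_restrict_of_forall_mem measurableSet_Ioi fun ω hω ↦
      norm_mul_one_sub_cos_le hs0 hs2 (le_of_lt hω) ht (h ω))

lemma tendsto_integral_mul_one_sub_cos_div_atTop (hs0 : 0 ≤ s) (hs1 : s < 1)
    (hh : IntegrableOn (fun ω ↦ ω ^ s * h ω) (Ioi 0)) :
    Tendsto (fun t ↦ (∫ ω in Ioi 0, h ω * (1 - cos (ω * t))) / t) atTop (nhds 0) := by
  set K := ∫ ω in Ioi 0, ‖ω ^ s * h ω‖
  have hK : Tendsto (fun t : ℝ ↦ 2 * K * t ^ (-(1 - s))) atTop (nhds 0) := by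
    simpa using (tendsto_rpow_neg_atTop (by linarith : 0 < 1 - s)).const_mul (2 * K)
  refine squeeze_zero_norm' ?_ hK
  filter_upwards [eventually_gt_atTop 0] with t ht
  rw [norm_div, Real.norm_eq_abs, Real.norm_of_nonneg ht.le, div_le_iff₀ ht,
    show -(1 - s) = s - 1 by ring, rpow_sub_one ht.ne']
  calc |∫ ω in Ioi 0, h ω * (1 - cos (ω * t))| ≤ 2 * t ^ s * K :=
        abs_integral_mul_one_sub_cos_le hs0 (by linarith) hh ht.le
    _ = 2 * K * (t ^ s / t) * t := by field_simp
end OneSubCos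

lemma integrableOn_Ioc_rpow {r : ℝ} (hr : -1 < r) (c : ℝ) :
    IntegrableOn (fun ω : ℝ ↦ ω ^ r) (Ioc 0 c) := by
  rcases le_total 0 c with hc | hc
  · exact (intervalIntegrable_iff_integrableOn_Ioc_of_le hc).1
      (intervalIntegral.intervalIntegrable_rpow' hr)
  · simp [Ioc_eq_empty_of_le hc]

lemma integrableOn_Ioi_rpow_mul_one_sub_cos {q : ℝ} (hq3 : -3 < q) (hq1 : q < -1) {t : ℝ}
    (ht : 0 ≤ t) : IntegrableOn (fun ω ↦ ω ^ q * (1 - cos (ω * t))) (Ioi 0) := by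
  rw [← Ioc_union_Ioi_eq_Ioi zero_le_one]
  refine IntegrableOn.union ?_ ?_
  · refine IntegrableOn.mul_one_sub_cos measurableSet_Ioc Ioc_subset_Ioi_self zero_le_two le_rfl
      ((integrableOn_Ioc_rpow (by linarith : -1 < 2 + q) 1).congr_fun (fun ω hω ↦ ?_)
        measurableSet_Ioc) ht
    exact rpow_add hω.1 2 q
  · refine IntegrableOn.mul_one_sub_cos measurableSet_Ioi (Ioi_subset_Ioi zero_le_one) le_rfl
      zero_le_two ?_ ht
    simpa using integrableOn_Ioi_rpow_of_lt hq1 one_pos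

lemma integral_rpow_mul_one_sub_cos_mul (q : ℝ) {t : ℝ} (ht : 0 < t) :
    ∫ ω in Ioi 0, ω ^ q * (1 - cos (ω * t))
      = t ^ (-q - 1) * ∫ x in Ioi 0, x ^ q * (1 - cos x) := by
  calc ∫ ω in Ioi 0, ω ^ q * (1 - cos (ω * t))
      = ∫ ω in Ioi 0, t ^ (-q) * ((t * ω) ^ q * (1 - cos (t * ω))) := by
        refine setIntegral_congr_fun measurableSet_Ioi fun ω (hω : 0 < ω) ↦ ?_
        rw [mul_rpow ht.le hω.le, mul_comm t ω, ← mul_assoc, ← mul_assoc, ← rpow_add ht]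
        simp
    _ = t ^ (-q) * (t⁻¹ * ∫ x in Ioi 0, x ^ q * (1 - cos x)) := by
        rw [integral_const_mul, integral_comp_mul_left_Ioi (fun x ↦ x ^ q * (1 - cos x)) 0 ht,
          mul_zero, smul_eq_mul]
    _ = t ^ (-q - 1) * ∫ x in Ioi 0, x ^ q * (1 - cos x) := by
        rw [rpow_sub ht, rpow_one]; ring

lemma integral_rpow_mul_one_sub_cos_pos {q : ℝ} (hq3 : -3 < q) (hq1 : q < -1) :
    0 < ∫ x in Ioi 0, x ^ q * (1 - cos x) := by
  have hint := integrableOn_Ioi_rpow_mul_one_sub_cos hq3 hq1 zero_le_one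
  simp only [mul_one] at hint
  have hnonneg : ∀ x ∈ Ioi (0 : ℝ), 0 ≤ x ^ q * (1 - cos x) := fun x hx ↦
    mul_nonneg (rpow_nonneg (le_of_lt hx) q) (by linarith [cos_le_one x])
  rw [setIntegral_pos_iff_support_of_nonneg_ae
    (ae_restrict_of_forall_mem measurableSet_Ioi hnonneg) hint]
  refine (isOpen_Ioo.measure_pos volume (nonempty_Ioo.2 pi_pos)).trans_le
    (measure_mono fun x hx ↦ ⟨?_, hx.1⟩)
  have hcos : cos x < 1 := by simpa using cos_lt_cos_of_nonneg_of_le_pi le_rfl hx.2.le hx.1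
  exact (mul_pos (rpow_pos_of_pos hx.1 q) (by linarith)).ne'

lemma abs_sub_left_le_of_hasDerivWithinAt_Ico {f f' : ℝ → ℝ} {a b C x : ℝ}
    (hf : ∀ y ∈ Ico a b, HasDerivWithinAt f (f' y) (Ico a b) y) (hC : ∀ y ∈ Ico a b, |f' y| ≤ C)
    (hx : x ∈ Ico a b) : |f x - f a| ≤ C * (x - a) := by
  simpa [Real.norm_eq_abs, abs_of_nonneg (sub_nonneg.2 hx.1)] using
    (convex_Ico a b).norm_image_sub_le_of_norm_hasDerivWithin_le hf (by simpa using hC)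
      (left_mem_Ico.2 (hx.1.trans_lt hx.2)) hx

lemma exists_abs_sub_le_mul_of_abs_deriv2_le {G G' G'' : ℝ → ℝ} {c M : ℝ}
    (hG' : ∀ ω ∈ Ico 0 c, HasDerivWithinAt G (G' ω) (Ico 0 c) ω)
    (hG'' : ∀ ω ∈ Ico 0 c, HasDerivWithinAt G' (G'' ω) (Ico 0 c) ω)
    (hM : ∀ ω ∈ Ico 0 c, |G'' ω| ≤ M) :
    ∃ L, ∀ ω ∈ Ico 0 c, |G ω - G 0| ≤ L * ω := by
  have hG'_le : ∀ ω ∈ Ico 0 c, |G' ω| ≤ |G' 0| + M * c := fun ω hω ↦ by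
    have h := abs_sub_left_le_of_hasDerivWithinAt_Ico hG'' hM hω
    have hM0 : 0 ≤ M := (abs_nonneg _).trans (hM ω hω)
    nlinarith [abs_sub_abs_le_abs_sub (G' ω) (G' 0), hω.2]
  exact ⟨_, fun ω hω ↦ by simpa using abs_sub_left_le_of_hasDerivWithinAt_Ico hG' hG'_le hω⟩

lemma nonneg_of_continuousWithinAt_Ioo {f : ℝ → ℝ} {a b : ℝ} (hab : a < b)
    (hf : ContinuousWithinAt f (Ioo a b) a) (h : ∀ x ∈ Ioo a b, 0 ≤ f x) : 0 ≤ f a :=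
  haveI := left_nhdsWithin_Ioo_neBot hab
  ge_of_tendsto hf (eventually_nhdsWithin_of_forall h)

lemma integrableOn_Ioo_rpow_mul_sub {G : ℝ → ℝ} {c r L : ℝ} (hr : -2 < r)
    (hG : ContinuousOn G (Ioo 0 c)) (hLip : ∀ ω ∈ Ioo 0 c, |G ω - G 0| ≤ L * ω) :
    IntegrableOn (fun ω ↦ ω ^ r * (G ω - G 0)) (Ioo 0 c) := by
  refine Integrable.mono' (((integrableOn_Ioc_rpow (by linarith : -1 < r + 1) c).mono_set
    Ioo_subset_Ioc_self).const_mul L) ?_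
    (ae_restrict_of_forall_mem measurableSet_Ioo fun ω hω ↦ ?_)
  · exact (measurable_id.pow_const r).aestronglyMeasurable.mul
      ((hG.aestronglyMeasurable measurableSet_Ioo).sub aestronglyMeasurable_const)
  · rw [norm_mul, Real.norm_of_nonneg (rpow_nonneg hω.1.le r), Real.norm_eq_abs, rpow_add hω.1,
      rpow_one]
    nlinarith [hLip ω hω, rpow_nonneg hω.1.le r]

lemma integrableOn_Ici_rpow_mul {S : ℝ → ℝ} {c r : ℝ} (hc : 0 < c) (hr : r ≤ 0)
    (hS : IntegrableOn S (Ici c)) : IntegrableOn (fun ω ↦ ω ^ r * S ω) (Ici c) :=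
  hS.bdd_mul (c := c ^ r) (measurable_id.pow_const r).aestronglyMeasurable
    (ae_restrict_of_forall_mem measurableSet_Ici fun ω (hω : c ≤ ω) ↦ by
      rw [Real.norm_of_nonneg (rpow_nonneg (hc.le.trans hω) r)]
      exact rpow_le_rpow_of_nonpos hc hω hr)

lemma integrableOn_rpow_mul_sub_rpow {S G : ℝ → ℝ} {ωc p s L : ℝ} (hωc : 0 < ωc)
    (hps0 : 0 < p + s) (hps1 : p + s < 1) (hs2 : s ≤ 2) (hS : IntegrableOn S (Ici ωc))
    (hfact : ∀ ω ∈ Ioo 0 ωc, S ω = ω ^ p * G ω) (hG : ContinuousOn G (Ioo 0 ωc))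
    (hLip : ∀ ω ∈ Ioo 0 ωc, |G ω - G 0| ≤ L * ω) :
    IntegrableOn (fun ω ↦ ω ^ s * (S ω / ω ^ 2 - G 0 * ω ^ (p - 2))) (Ioi 0) := by
  have hpow : ∀ ω : ℝ, 0 < ω → ∀ a : ℝ, ω ^ (a - 2) = ω ^ a / ω ^ 2 := fun ω hω a ↦ by
    rw [rpow_sub hω, rpow_two]
  rw [← Ioo_union_Ici_eq_Ioi hωc]
  refine IntegrableOn.union ?_ ?_
  · refine (integrableOn_Ioo_rpow_mul_sub (r := s + p - 2) (by linarith) hG hLip).congr_fun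
      (fun ω hω ↦ ?_) measurableSet_Ioo
    dsimp only
    rw [hfact ω hω, hpow ω hω.1, hpow ω hω.1, rpow_add hω.1]
    ring
  · have htail : IntegrableOn (fun ω : ℝ ↦ ω ^ (s + p - 2)) (Ici ωc) := by
      rw [integrableOn_Ici_iff_integrableOn_Ioi]
      exact integrableOn_Ioi_rpow_of_lt (by linarith) hωc
    refine ((integrableOn_Ici_rpow_mul hωc (by linarith : s - 2 ≤ 0) hS).sub
      (htail.const_mul (G 0))).congr_fun (fun ω (hω : ωc ≤ ω) ↦ ?_) measurableSet_Ici
    have hω : 0 < ω := hωc.trans_le hω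
    simp only [Pi.sub_apply]
    rw [hpow ω hω, hpow ω hω, hpow ω hω, rpow_add hω]
    ring

theorem trushechkin_case_p_between_neg_one_zero_general
    (ωc p : ℝ) (hωc : 0 < ωc) (hp0 : -1 < p) (hp1 : p < 0)
    (S G G' G'' : ℝ → ℝ)
    (hS_int : IntegrableOn S (Ici 0))
    (hfact : ∀ ω ∈ Ioo 0 ωc, S ω = ω ^ p * G ω)
    (hG' : ∀ ω ∈ Ico 0 ωc, HasDerivWithinAt G (G' ω) (Ico 0 ωc) ω)
    (hG'' : ∀ ω ∈ Ico 0 ωc, HasDerivWithinAt G' (G'' ω) (Ico 0 ωc) ω)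
    (hG''bd : ∃ M : ℝ, ∀ ω ∈ Ico 0 ωc, |G'' ω| ≤ M)
    (hG0 : G 0 ≠ 0) :
    ∃ C₂ C₄ : ℝ,
      Tendsto (fun t : ℝ =>
          ((∫ ω in Ioi (0:ℝ), S ω * (1 - Real.cos (ω * t)) / ω ^ 2)
            - C₂ - G 0 * C₄ * t ^ (1 - p)) / t)
        atTop (nhds 0) ∧
      ((∀ ω ≥ (0:ℝ), 0 ≤ S ω) → 0 < G 0 * C₄) := by
  obtain ⟨M, hM⟩ := hG''bd
  obtain ⟨L, hLip⟩ := exists_abs_sub_le_mul_of_abs_deriv2_le hG' hG'' hM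
  have hGcont : ContinuousOn G (Ico 0 ωc) := fun ω hω ↦ (hG' ω hω).continuousWithinAt
  have hh := integrableOn_rpow_mul_sub_rpow (s := (1 - p) / 2) hωc (by linarith) (by linarith)
    (by linarith) (hS_int.mono_set (Ici_subset_Ici.2 hωc.le)) hfact
    (hGcont.mono Ioo_subset_Ico_self) fun ω hω ↦ hLip ω (Ioo_subset_Ico_self hω)
  set C₄ := ∫ x in Ioi 0, x ^ (p - 2) * (1 - cos x)
  have hsplit : ∀ t > 0, ∫ ω in Ioi 0, S ω * (1 - cos (ω * t)) / ω ^ 2 =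
      (∫ ω in Ioi 0, (S ω / ω ^ 2 - G 0 * ω ^ (p - 2)) * (1 - cos (ω * t)))
        + G 0 * C₄ * t ^ (1 - p) := fun t ht ↦ by
    rw [mul_assoc, mul_comm C₄, ← show -(p - 2) - 1 = 1 - p by ring,
      ← integral_rpow_mul_one_sub_cos_mul _ ht, ← integral_const_mul,
      ← integral_add (hh.mul_one_sub_cos measurableSet_Ioi subset_rfl (by linarith) (by linarith)
        ht.le)
        ((integrableOn_Ioi_rpow_mul_one_sub_cos (by linarith) (by linarith) ht.le).const_mul _)]
    congr 1 with ω
    ring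
  refine ⟨0, C₄, ?_, fun hS ↦ ?_⟩
  · refine (tendsto_integral_mul_one_sub_cos_div_atTop (by linarith) (by linarith) hh).congr' ?_
    filter_upwards [eventually_gt_atTop 0] with t ht
    rw [hsplit t ht]
    ring
  · have hG0_nonneg : 0 ≤ G 0 :=
      nonneg_of_continuousWithinAt_Ioo hωc ((hGcont 0 ⟨le_rfl, hωc⟩).mono Ioo_subset_Ico_self)
        fun ω hω ↦ (mul_nonneg_iff_of_pos_left (rpow_pos_of_pos hω.1 p)).1
          (hfact ω hω ▸ hS ω hω.1.le)
    exact mul_pos (hG0_nonneg.lt_of_ne' hG0)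
      (integral_rpow_mul_one_sub_cos_pos (by linarith) (by linarith))

/-- **Trushechkin's theorem, case `-1 < p < 0`.**
If `S` is integrable on `[0,∞)` and factors as `S ω = ω^p G ω` on `(0, ω_c)` with `G` twice
differentiable on `[0, ω_c)`, `G''` bounded there, and `G 0 ≠ 0`, `G' 0 ≠ 0`, then there are
constants `C₂, C₄` such that `(Γ t - C₂ - G 0 · C₄ · t^(1-p)) / t → 0` as `t → ∞`, where
`Γ t = ∫₀^∞ S ω (1 - cos (ω t)) / ω² dω`; moreover if `S ≥ 0` then `G 0 · C₄ > 0`. -/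
theorem trushechkin_case_p_between_neg_one_zero
    (ωc p : ℝ) (hωc : 0 < ωc) (hp0 : -1 < p) (hp1 : p < 0)
    (S G G' G'' : ℝ → ℝ)
    (hS_int : IntegrableOn S (Ici 0))
    (hfact : ∀ ω ∈ Ioo 0 ωc, S ω = ω ^ p * G ω)
    (hG' : ∀ ω ∈ Ico 0 ωc, HasDerivWithinAt G (G' ω) (Ico 0 ωc) ω)
    (hG'' : ∀ ω ∈ Ico 0 ωc, HasDerivWithinAt G' (G'' ω) (Ico 0 ωc) ω)
    (hG''bd : ∃ M : ℝ, ∀ ω ∈ Ico 0 ωc, |G'' ω| ≤ M)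
    (hG0 : G 0 ≠ 0) (hG'0 : G' 0 ≠ 0) :
    ∃ C₂ C₄ : ℝ,
      Tendsto (fun t : ℝ =>
          ((∫ ω in Ioi (0:ℝ), S ω * (1 - Real.cos (ω * t)) / ω ^ 2)
            - C₂ - G 0 * C₄ * t ^ (1 - p)) / t)
        atTop (nhds 0) ∧
      ((∀ ω ≥ (0:ℝ), 0 ≤ S ω) → 0 < G 0 * C₄) :=
  trushechkin_case_p_between_neg_one_zero_general ωc p hωc hp0 hp1 S G G' G'' hS_int hfact hG' hG''
    hG''bd hG0
end
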